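/- arXiv:1811.06419 — 2 statements merged into one kernel-verified Lean document; each statement's English description precedes it below -/
import Mathlib

section
/- (Theorem 2, upper bounds: GHP upper bound is tighter than the Jensen–Shannon upper bound.) For m ≥ 3, the GHP upper bound on the Bayes error is dominated by the generalized Jensen–Shannon upper bound: 2 Σ_{1≤i<j≤m} δ^m_ij ≤ ε^m_JS. Consequently ε^m ≤ 2 Σ_{1≤i<j≤m} δ^m_ij ≤ ε^m_JS. -/
open MeasureTheory Finset

/-- The mixture density `f⁽ᵐ⁾(x) = ∑ₖ pₖ fₖ(x)`. -/
noncomputable def mixture {m d : ℕ} (p : Fin m → ℝ) (f : Fin m → (Fin d → ℝ) → ℝ)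
    (x : Fin d → ℝ) : ℝ :=
  ∑ k, p k * f k x

/-- The multi-class Bayes error rate `ε^m = 1 - ∫ max_k pₖ fₖ(x) dx`. -/
noncomputable def bayesError {m d : ℕ} (p : Fin m → ℝ) (f : Fin m → (Fin d → ℝ) → ℝ) : ℝ :=
  1 - ∫ x : Fin d → ℝ, ⨆ k, p k * f k x

/-- `δ^m_ij = ∫ pᵢ pⱼ fᵢ(x) fⱼ(x) / f⁽ᵐ⁾(x) dx` (integrand `0` where the denominator is `0`). -/
noncomputable def deltaGHP {m d : ℕ} (p : Fin m → ℝ) (f : Fin m → (Fin d → ℝ) → ℝ)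
    (i j : Fin m) : ℝ :=
  ∫ x : Fin d → ℝ, p i * p j * f i x * f j x / mixture p f x

/-- `δ_ij = ∫ pᵢ pⱼ fᵢ(x) fⱼ(x) / (pᵢ fᵢ(x) + pⱼ fⱼ(x)) dx`
(integrand `0` where the denominator is `0`). -/
noncomputable def deltaPW {m d : ℕ} (p : Fin m → ℝ) (f : Fin m → (Fin d → ℝ) → ℝ)
    (i j : Fin m) : ℝ :=
  ∫ x : Fin d → ℝ, p i * p j * f i x * f j x / (p i * f i x + p j * f j x)

/-- The generalized Jensen–Shannon upper bound on the Bayes error: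
`ε^m_JS = -(1/2) ∫ ∑ₖ pₖ fₖ(x) log₂(pₖ fₖ(x) / f⁽ᵐ⁾(x)) dx`, with the convention
`0 · log₂ 0 = 0`.  It equals `(1/2)(H(p) - JS_p(f₁,…,f_m))`. -/
noncomputable def epsJS {m d : ℕ} (p : Fin m → ℝ) (f : Fin m → (Fin d → ℝ) → ℝ) : ℝ :=
  -(1 / 2) * ∫ x : Fin d → ℝ,
    ∑ k, p k * f k x * Real.logb 2 (p k * f k x / mixture p f x)

/-!
Pointwise in `x`, write `aₖ = pₖ fₖ(x)`, `s = ∑ₖ aₖ` and `tₖ = aₖ / s` for the posterior.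
The integrands of `1 - ε^m`, of `2 ∑_{i<j} δ^m_ij` and of `ε^m_JS` are `s (1 - maxₖ tₖ)`,
`s ∑ₖ tₖ (1 - tₖ)` (as `2 ∑_{i<j} tᵢ tⱼ = 1 - ∑ₖ tₖ²`) and `s H(t) / (2 log 2)`, with `H`
the Shannon entropy in nats. So it suffices that `1 - max t ≤ ∑ₖ tₖ (1 - tₖ) ≤ H(t) / (2 log 2)`
on the simplex. The first inequality is `∑ₖ tₖ² ≤ max t`. For the second,
`φ(t) = -log t - 2 log 2 (1 - t)` is antitone on `(0, 1/2]` with `φ(1/2) = 0`, which settles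
the case `max t ≤ 1/2` term by term. Otherwise the maximal coordinate `M > 1/2` is unique, and
by the same monotonicity the other coordinates may be merged into a single one of mass `1 - M`;
this reduces to the binary inequality `4 log 2 · p (1 - p) ≤ h(p)`, proved by calculus.
-/

open Real Set

theorem hasDerivAt_binEntropy_sub_four_mul_log_two_mul {p : ℝ} (hp₀ : p ≠ 0) (hp₁ : p ≠ 1) :
    HasDerivAt (fun p => binEntropy p - 4 * log 2 * (p * (1 - p)))
      (log (1 - p) - log p - 4 * log 2 * (1 - 2 * p)) p :=
  ((hasDerivAt_binEntropy hp₀ hp₁).sub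
    (((hasDerivAt_id' p).mul ((hasDerivAt_id' p).const_sub 1)).const_mul (4 * log 2))).congr_deriv
    (by ring)

theorem convexOn_log_one_sub_sub_log_sub :
    ConvexOn ℝ (Ioc 0 (1 / 2)) (fun p => log (1 - p) - log p - 4 * log 2 * (1 - 2 * p)) := by
  refine convexOn_of_hasDerivWithinAt2_nonneg (convex_Ioc _ _)
    (f' := fun p => 8 * log 2 - (1 - p)⁻¹ - p⁻¹)
    (f'' := fun p => (p ^ 2)⁻¹ - ((1 - p) ^ 2)⁻¹) ?_ ?_ ?_ ?_
  · refine ContinuousOn.sub (ContinuousOn.sub ?_ ?_) (by fun_prop)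
    · exact continuousOn_log.comp (by fun_prop) fun x hx => by
        simp only [mem_compl_iff, mem_singleton_iff]; linarith [hx.2]
    · exact continuousOn_log.mono fun x hx => by
        simp only [mem_compl_iff, mem_singleton_iff]; exact hx.1.ne'
  all_goals intro x hx; rw [interior_Ioc] at hx; obtain ⟨hx0, hx1⟩ := hx
  · have h1 : (1 - x) ≠ 0 := by linarith
    refine ((((hasDerivAt_id' x).const_sub 1).log h1).sub (hasDerivAt_log hx0.ne') |>.sub
      (((hasDerivAt_id' x).const_mul 2).const_sub 1 |>.const_mul (4 * log 2))).hasDerivWithinAt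
      |>.congr_deriv ?_
    field_simp; ring
  · have h1 : (1 - x) ≠ 0 := by linarith
    refine (((hasDerivAt_inv h1).comp x ((hasDerivAt_id' x).const_sub 1)).const_sub (8 * log 2)).sub
      (hasDerivAt_inv hx0.ne') |>.hasDerivWithinAt.congr_deriv ?_
    ring
  · have : x ^ 2 ≤ (1 - x) ^ 2 := by nlinarith
    simp only [sub_nonneg]
    exact inv_anti₀ (by positivity) this

theorem four_mul_log_two_mul_le_binEntropy {p : ℝ} (hp₀ : 0 ≤ p) (hp₁ : p ≤ 1) :
    4 * log 2 * (p * (1 - p)) ≤ binEntropy p := by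
  wlog hp : p ≤ 1 / 2 generalizing p
  · simpa [mul_comm] using this (p := 1 - p) (by linarith) (by linarith) (by linarith)
  set G := fun q => binEntropy q - 4 * log 2 * (q * (1 - q))
  set g := fun q => log (1 - q) - log q - 4 * log 2 * (1 - 2 * q)
  suffices 0 ≤ G p by simpa [G, sub_nonneg] using this
  have hG : Continuous G := by fun_prop
  have hG' : ∀ x ∈ Ioo 0 (1 / 2 : ℝ), HasDerivAt G (g x) x := fun x hx =>
    hasDerivAt_binEntropy_sub_four_mul_log_two_mul hx.1.ne' (by linarith [hx.2])
  -- `g = G'` is convex with `g (1/2) = 0`, so `{g ≤ 0}` is an interval ending at `1/2`: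
  -- `G` increases from `G 0 = 0`, then decreases to `G (1/2) = 0`.
  have hS := (convexOn_log_one_sub_sub_log_sub.convex_le 0).ordConnected
  have hg_half : g (1 / 2) = 0 := by norm_num [g]
  rcases hp₀.eq_or_lt with rfl | hp₀
  · simp [G]
  rcases le_or_gt (g p) 0 with hgp | hgp
  · have hanti : AntitoneOn G (Icc p (1 / 2)) := by
      refine antitoneOn_of_hasDerivWithinAt_nonpos (f' := g) (convex_Icc _ _) hG.continuousOn
        (fun x hx => ?_) (fun x hx => ?_)
      · rw [interior_Icc] at hx
        exact (hG' x ⟨hp₀.trans hx.1, hx.2⟩).hasDerivWithinAt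
      · rw [interior_Icc] at hx
        exact (hS.out ⟨⟨hp₀, hp⟩, hgp⟩ ⟨⟨by norm_num, le_rfl⟩, hg_half.le⟩
          (Ioo_subset_Icc_self hx)).2
    have := hanti ⟨le_rfl, hp⟩ ⟨hp, le_rfl⟩ hp
    simp only [G, one_div, binEntropy_two_inv] at this ⊢
    linarith
  · have hmono : MonotoneOn G (Icc 0 p) := by
      refine monotoneOn_of_hasDerivWithinAt_nonneg (f' := g) (convex_Icc _ _) hG.continuousOn
        (fun x hx => ?_) (fun x hx => ?_)
      · rw [interior_Icc] at hx
        exact (hG' x ⟨hx.1, hx.2.trans_le hp⟩).hasDerivWithinAt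
      · rw [interior_Icc] at hx
        by_contra! hgx
        have := (hS.out ⟨⟨hx.1, by linarith [hx.2]⟩, hgx.le⟩ ⟨⟨by norm_num, le_rfl⟩, hg_half.le⟩
          ⟨hx.2.le, hp⟩).2
        linarith
    simpa [G] using hmono ⟨le_rfl, hp₀.le⟩ ⟨hp₀.le, le_rfl⟩ hp₀.le

theorem antitoneOn_neg_log_sub_two_mul_log_two_mul :
    AntitoneOn (fun t => -log t - 2 * log 2 * (1 - t)) (Ioc 0 (1 / 2)) := by
  intro u hu v hv huv
  have hlog : log (u / v) ≤ u / v - 1 := log_le_sub_one_of_pos (div_pos hu.1 hv.1)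
  rw [log_div hu.1.ne' hv.1.ne'] at hlog
  have hslope : (u - v) / v ≤ 2 * (u - v) := by
    rw [div_le_iff₀ hv.1]; nlinarith [hv.2]
  have hdiv : u / v - 1 = (u - v) / v := by rw [sub_div, div_self hv.1.ne']
  nlinarith [log_two_lt_d9]

theorem mul_neg_log_sub_le_negMulLog_sub {t b : ℝ} (ht : 0 ≤ t) (htb : t ≤ b) (hb : b ≤ 1 / 2) :
    t * (-log b - 2 * log 2 * (1 - b)) ≤ negMulLog t - 2 * log 2 * (t * (1 - t)) := by
  rcases ht.eq_or_lt with rfl | ht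
  · simp
  have := antitoneOn_neg_log_sub_two_mul_log_two_mul ⟨ht, htb.trans hb⟩ ⟨ht.trans_le htb, hb⟩ htb
  rw [negMulLog]
  nlinarith

theorem two_mul_log_two_mul_sum_le_sum_negMulLog {ι : Type*} [Fintype ι]
    {t : ι → ℝ} (ht : ∀ k, 0 ≤ t k) (ht₁ : ∑ k, t k = 1) :
    2 * log 2 * ∑ k, t k * (1 - t k) ≤ ∑ k, negMulLog (t k) := by
  classical
  rw [← sub_nonneg, mul_sum, ← sum_sub_distrib]
  by_cases hbig : ∃ i, 1 / 2 < t i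
  · obtain ⟨i, hi⟩ := hbig
    have hrest : ∑ k ∈ univ.erase i, t k = 1 - t i := by
      rw [← ht₁, ← add_sum_erase _ _ (mem_univ i)]; ring
    have hle : ∀ k ∈ univ.erase i, t k ≤ 1 - t i := fun k hk =>
      hrest ▸ single_le_sum (fun l _ => ht l) hk
    have hbin := four_mul_log_two_mul_le_binEntropy (ht i)
      (ht₁ ▸ single_le_sum (fun l _ => ht l) (mem_univ i))
    rw [binEntropy_eq_negMulLog_add_negMulLog_one_sub] at hbin
    calc 0 ≤ negMulLog (t i) - 2 * log 2 * (t i * (1 - t i)) +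
          (1 - t i) * (-log (1 - t i) - 2 * log 2 * (1 - (1 - t i))) := by
          simp only [negMulLog] at hbin ⊢; nlinarith
      _ = negMulLog (t i) - 2 * log 2 * (t i * (1 - t i)) +
          ∑ k ∈ univ.erase i, t k * (-log (1 - t i) - 2 * log 2 * (1 - (1 - t i))) := by
          rw [← sum_mul, hrest]
      _ ≤ _ := by
          rw [← add_sum_erase _ _ (mem_univ i)]
          gcongr with k hk
          exact mul_neg_log_sub_le_negMulLog_sub (ht k) (hle k hk) (by linarith)
  · push Not at hbig
    have h0 : -log (1 / 2 : ℝ) - 2 * log 2 * (1 - 1 / 2) = 0 := by rw [one_div, log_inv]; ring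
    refine sum_nonneg fun k _ => ?_
    have := mul_neg_log_sub_le_negMulLog_sub (ht k) (hbig k) le_rfl
    rwa [h0, mul_zero] at this

theorem one_sub_iSup_le_sum_mul_one_sub {ι : Type*} [Fintype ι] {t : ι → ℝ} (ht : ∀ k, 0 ≤ t k)
    (ht₁ : ∑ k, t k = 1) : 1 - ⨆ k, t k ≤ ∑ k, t k * (1 - t k) := by
  have hle : ∀ k, t k ≤ ⨆ k, t k := le_ciSup (Set.finite_range t).bddAbove
  calc 1 - ⨆ k, t k = ∑ k, t k * (1 - ⨆ k, t k) := by rw [← sum_mul, ht₁, one_mul]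
    _ ≤ ∑ k, t k * (1 - t k) := by gcongr with k; exact ht k; exact hle k

theorem mul_logb_div_eq_neg_mul_negMulLog (a s : ℝ) :
    a * logb 2 (a / s) = -(s / log 2) * negMulLog (a / s) := by
  rcases eq_or_ne s 0 with rfl | h
  · simp
  rw [logb, negMulLog]
  field_simp

theorem sum_div_sum_eq_one {ι : Type*} [Fintype ι] {a : ι → ℝ} (h : ∑ k, a k ≠ 0) :
    ∑ k, a k / ∑ l, a l = 1 := by
  rw [← sum_div, div_self h]

section Pointwise

variable {ι : Type*} [Fintype ι] [LinearOrder ι]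

theorem two_mul_sum_sum_ite_lt_mul {R : Type*} [CommRing R] (a : ι → R) :
    2 * ∑ i, ∑ j, (if i < j then a i * a j else 0) = (∑ i, a i) ^ 2 - ∑ i, a i ^ 2 := by
  have hsplit : ∀ i j, a i * a j =
      (if i < j then a i * a j else 0) + (if j < i then a j * a i else 0) +
        if i = j then a i * a j else 0 := by
    intro i j
    rcases lt_trichotomy i j with h | rfl | h
    · simp [h, h.not_gt, h.ne]
    · simp
    · simp [h, h.not_gt, h.ne', mul_comm]
  rw [sq, sum_mul_sum, sum_congr rfl fun i _ => sum_congr rfl fun j _ => hsplit i j]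
  simp only [sum_add_distrib]
  rw [sum_comm (f := fun i j => if j < i then a j * a i else 0)]
  simp [sq]
  ring

theorem two_mul_sum_sum_ite_lt_div_sum (a : ι → ℝ) :
    2 * ∑ i, ∑ j, (if i < j then a i * a j / ∑ k, a k else 0) =
      (∑ k, a k) * ∑ k, a k / (∑ l, a l) * (1 - a k / ∑ l, a l) := by
  set s := ∑ k, a k
  rcases eq_or_ne s 0 with h | h
  · simp [h]
  have hdiv : ∀ i j, (if i < j then a i * a j / s else 0) = (if i < j then a i * a j else 0) / s :=
    fun i j => by split_ifs <;> simp
  have hterm : ∀ k, a k / s * (1 - a k / s) = (a k * s - a k ^ 2) / s ^ 2 := fun k => by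
    field_simp
  calc _ = (2 * ∑ i, ∑ j, if i < j then a i * a j else 0) / s := by
        rw [mul_div_assoc]; simp only [hdiv, sum_div]
    _ = (s ^ 2 - ∑ k, a k ^ 2) / s := by rw [two_mul_sum_sum_ite_lt_mul]
    _ = s * ∑ k, a k / s * (1 - a k / s) := by
        simp only [hterm, ← sum_div, sum_sub_distrib, ← sum_mul]
        field_simp
        rw [sq]

theorem sum_sub_iSup_le_two_mul_sum_sum_ite_lt {a : ι → ℝ} (ha : ∀ k, 0 ≤ a k) :
    ∑ k, a k - ⨆ k, a k ≤ 2 * ∑ i, ∑ j, (if i < j then a i * a j / ∑ k, a k else 0) := by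
  rw [two_mul_sum_sum_ite_lt_div_sum]
  set s := ∑ k, a k
  have hs₀ : 0 ≤ s := sum_nonneg fun k _ => ha k
  rcases hs₀.eq_or_lt with hs | hs
  · rw [← hs, zero_mul, zero_sub, neg_nonpos]
    exact Real.iSup_nonneg ha
  have hsup : ⨆ k, a k = s * ⨆ k, a k / s := by
    rw [Real.mul_iSup_of_nonneg hs.le]
    simp_rw [mul_div_cancel₀ _ hs.ne']
  rw [hsup, ← mul_one_sub]
  exact mul_le_mul_of_nonneg_left (one_sub_iSup_le_sum_mul_one_sub
    (fun k => div_nonneg (ha k) hs.le) (sum_div_sum_eq_one hs.ne')) hs.le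

theorem two_mul_sum_sum_ite_lt_le_neg_half_sum_mul_logb {a : ι → ℝ} (ha : ∀ k, 0 ≤ a k) :
    2 * ∑ i, ∑ j, (if i < j then a i * a j / ∑ k, a k else 0) ≤
      -(1 / 2) * ∑ k, a k * logb 2 (a k / ∑ l, a l) := by
  rw [two_mul_sum_sum_ite_lt_div_sum]
  simp_rw [mul_logb_div_eq_neg_mul_negMulLog _ (∑ l, a l), ← mul_sum]
  set s := ∑ k, a k
  have hs₀ : 0 ≤ s := sum_nonneg fun k _ => ha k
  rcases hs₀.eq_or_lt with hs | hs
  · simp [← hs]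
  have := two_mul_log_two_mul_sum_le_sum_negMulLog (fun k => div_nonneg (ha k) hs.le)
    (sum_div_sum_eq_one hs.ne')
  have hlog : 0 < log 2 := log_pos one_lt_two
  calc s * ∑ k, a k / s * (1 - a k / s)
      = s / (2 * log 2) * (2 * log 2 * ∑ k, a k / s * (1 - a k / s)) := by field_simp
    _ ≤ s / (2 * log 2) * ∑ k, negMulLog (a k / s) := by gcongr
    _ = -(1 / 2) * (-(s / log 2) * ∑ k, negMulLog (a k / s)) := by ring

end Pointwise

section Integral

variable {α ι : Type*} [MeasurableSpace α] {μ : Measure α} [Fintype ι] {a : ι → α → ℝ}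

theorem integrable_iSup_of_nonneg (ha : ∀ k x, 0 ≤ a k x) (hai : ∀ k, Integrable (a k) μ) :
    Integrable (fun x => ⨆ k, a k x) μ := by
  refine (integrable_finsetSum univ fun k _ => hai k).mono
    (AEMeasurable.iSup fun k => (hai k).aemeasurable).aestronglyMeasurable (ae_of_all _ fun x => ?_)
  have hs : 0 ≤ ∑ k, a k x := sum_nonneg fun k _ => ha k x
  rw [norm_of_nonneg (Real.iSup_nonneg (ha · x)), norm_of_nonneg hs]
  exact Real.iSup_le (fun k => single_le_sum (fun l _ => ha l x) (mem_univ k)) hs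

theorem integrable_mul_div_sum (ha : ∀ k x, 0 ≤ a k x) (hai : ∀ k, Integrable (a k) μ) (i j : ι) :
    Integrable (fun x => a i x * a j x / ∑ k, a k x) μ := by
  have : ∀ k, AEMeasurable (a k) μ := fun k => (hai k).aemeasurable
  refine (hai i).mono (by fun_prop : AEMeasurable _ μ).aestronglyMeasurable
    (ae_of_all _ fun x => ?_)
  have hs : 0 ≤ ∑ k, a k x := sum_nonneg fun k _ => ha k x
  rw [norm_of_nonneg (by have := ha i x; have := ha j x; positivity), norm_of_nonneg (ha i x)]
  exact div_le_of_le_mul₀ hs (ha i x)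
    (mul_le_mul_of_nonneg_left (single_le_sum (fun l _ => ha l x) (mem_univ j)) (ha i x))

theorem integrable_mul_logb_div_sum (ha : ∀ k x, 0 ≤ a k x) (hai : ∀ k, Integrable (a k) μ)
    (k : ι) : Integrable (fun x => a k x * logb 2 (a k x / ∑ l, a l x)) μ := by
  have : ∀ k, AEMeasurable (a k) μ := fun k => (hai k).aemeasurable
  have hsum : Integrable (fun x => ∑ l, a l x) μ := integrable_finsetSum univ fun l _ => hai l
  refine (hsum.div_const (log 2)).mono
    (by simp only [logb]; fun_prop : AEMeasurable _ μ).aestronglyMeasurable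
    (ae_of_all _ fun x => ?_)
  have hs : 0 ≤ ∑ l, a l x := sum_nonneg fun l _ => ha l x
  have ht₀ : 0 ≤ a k x / ∑ l, a l x := div_nonneg (ha k x) hs
  have ht₁ : a k x / ∑ l, a l x ≤ 1 :=
    div_le_one_of_le₀ (single_le_sum (fun l _ => ha l x) (mem_univ k)) hs
  have hlog : 0 < log 2 := log_pos one_lt_two
  rw [mul_logb_div_eq_neg_mul_negMulLog, norm_mul, norm_neg,
    norm_of_nonneg (negMulLog_nonneg ht₀ ht₁), norm_of_nonneg (by positivity)]
  exact mul_le_of_le_one_right (by positivity)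
    ((negMulLog_le_one_sub_self ht₀).trans (sub_le_self _ ht₀))

section Pairs

variable [LinearOrder ι] {g : ι → ι → α → ℝ}

theorem integrable_sum_sum_ite_lt (hg : ∀ i j, Integrable (g i j) μ) :
    Integrable (fun x => ∑ i, ∑ j, if i < j then g i j x else 0) μ := by
  simp_rw [← sum_filter]
  exact integrable_finsetSum _ fun i _ => integrable_finsetSum _ fun j _ => hg i j

theorem integral_sum_sum_ite_lt (hg : ∀ i j, Integrable (g i j) μ) :
    ∫ x, (∑ i, ∑ j, if i < j then g i j x else 0) ∂μ =
      ∑ i, ∑ j, if i < j then ∫ x, g i j x ∂μ else 0 := by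
  simp_rw [← sum_filter]
  rw [integral_finsetSum _ fun i _ => integrable_finsetSum _ fun j _ => hg i j]
  exact sum_congr rfl fun i _ => integral_finsetSum _ fun j _ => hg i j

theorem integral_sum_sub_integral_iSup_le (ha : ∀ k x, 0 ≤ a k x)
    (hai : ∀ k, Integrable (a k) μ) :
    ∫ x, ∑ k, a k x ∂μ - ∫ x, ⨆ k, a k x ∂μ ≤
      2 * ∑ i, ∑ j, if i < j then ∫ x, a i x * a j x / ∑ k, a k x ∂μ else 0 := by
  have hpair := integrable_mul_div_sum ha hai
  have hsum := integrable_finsetSum univ fun k _ => hai k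
  have hsup := integrable_iSup_of_nonneg ha hai
  rw [← integral_sub hsum hsup, ← integral_sum_sum_ite_lt hpair, ← integral_const_mul]
  exact integral_mono (hsum.sub hsup) ((integrable_sum_sum_ite_lt hpair).const_mul 2)
    fun x => sum_sub_iSup_le_two_mul_sum_sum_ite_lt (ha · x)

theorem two_mul_sum_integral_le_neg_half_integral_sum_mul_logb (ha : ∀ k x, 0 ≤ a k x)
    (hai : ∀ k, Integrable (a k) μ) :
    2 * ∑ i, ∑ j, (if i < j then ∫ x, a i x * a j x / ∑ k, a k x ∂μ else 0) ≤
      -(1 / 2) * ∫ x, ∑ k, a k x * logb 2 (a k x / ∑ l, a l x) ∂μ := by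
  have hpair := integrable_mul_div_sum ha hai
  rw [← integral_sum_sum_ite_lt hpair, ← integral_const_mul, ← integral_const_mul]
  exact integral_mono ((integrable_sum_sum_ite_lt hpair).const_mul 2)
    ((integrable_finsetSum univ fun k _ => integrable_mul_logb_div_sum ha hai k).const_mul _)
    fun x => two_mul_sum_sum_ite_lt_le_neg_half_sum_mul_logb (ha · x)

end Pairs

end Integral

theorem GHP_upper_tighter_than_JS_upper_general
    (m d : ℕ)
    (p : Fin m → ℝ) (hp : ∀ k, 0 < p k) (hp1 : ∑ k, p k = 1)
    (f : Fin m → (Fin d → ℝ) → ℝ)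
    (hfnn : ∀ k x, 0 ≤ f k x)
    (hfint : ∀ k, ∫ x : Fin d → ℝ, f k x = 1) :
    bayesError p f ≤
        2 * ∑ i : Fin m, ∑ j : Fin m, (if i < j then deltaGHP p f i j else 0) ∧
      2 * ∑ i : Fin m, ∑ j : Fin m, (if i < j then deltaGHP p f i j else 0) ≤
        epsJS p f := by
  have ha : ∀ k x, 0 ≤ p k * f k x := fun k x => mul_nonneg (hp k).le (hfnn k x)
  have hai : ∀ k, Integrable (fun x => p k * f k x) := fun k =>
    (Integrable.of_integral_ne_zero (by simp [hfint k])).const_mul (p k)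
  have hmix : ∫ x, ∑ k, p k * f k x = 1 := by
    simp [integral_finsetSum _ fun k _ => hai k, integral_const_mul, hfint, hp1]
  have hδ : ∀ i j, deltaGHP p f i j = ∫ x, p i * f i x * (p j * f j x) / ∑ k, p k * f k x :=
    fun i j => integral_congr_ae (ae_of_all _ fun x => by simp only [mixture]; ring)
  simp only [hδ]
  refine ⟨?_, two_mul_sum_integral_le_neg_half_integral_sum_mul_logb ha hai⟩
  rw [bayesError, ← hmix]
  exact integral_sum_sub_integral_iSup_le ha hai

theorem GHP_upper_tighter_than_JS_upper
    (m d : ℕ) (hm : 3 ≤ m) (hd : 1 ≤ d)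
    (p : Fin m → ℝ) (hp : ∀ k, 0 < p k) (hp1 : ∑ k, p k = 1)
    (f : Fin m → (Fin d → ℝ) → ℝ)
    (hfmeas : ∀ k, Measurable (f k))
    (hfnn : ∀ k x, 0 ≤ f k x)
    (hfint : ∀ k, ∫ x : Fin d → ℝ, f k x = 1) :
    bayesError p f ≤
        2 * ∑ i : Fin m, ∑ j : Fin m, (if i < j then deltaGHP p f i j else 0) ∧
      2 * ∑ i : Fin m, ∑ j : Fin m, (if i < j then deltaGHP p f i j else 0) ≤
        epsJS p f :=
  GHP_upper_tighter_than_JS_upper_general m d p hp hp1 f hfnn hfint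
end

section
/- (Relation (b) between the HP-integral and the GHP-integral.) Let m ≥ 3 and fix i ≠ j. There exists a constant C > 0 depending only on the priors p_1,…,p_m (and not on the densities) such that HP(f_i, f_j) ≤ GHP^m(f_i, f_j) + C·(1 − D), where 1 − D = (1/((p_i+p_j)(1 − p_i − p_j))) ∫ (p_i f_i(x) + p_j f_j(x))·(Σ_{k≠i,j} p_k f_k(x))/f^(m)(x) dx is the complement of the Henze–Penrose divergence, with weights (p_i+p_j, 1−p_i−p_j), between the normalized mixture p̃_ij f_i + p̃_ji f_j and the normalized mixture Σ_{k≠i,j} p̃_k^{ij} f_k, where p̃_ij = p_i/(p_i+p_j), p̃_ji = p_j/(p_i+p_j), and p̃_k^{ij} = p_k/Σ_{r≠i,j} p_r. -/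
/-!
Write `s = pᵢfᵢ + pⱼfⱼ` and `r = ∑_{k ≠ i, j} pₖfₖ`, so that `f⁽ᵐ⁾ = s + r`. Pointwise,
`fᵢfⱼ/s - fᵢfⱼ/(s + r) = fᵢfⱼ r / (s (s + r))`, and AM-GM `4 pᵢpⱼ fᵢfⱼ ≤ s²` bounds this by
`(4 pᵢpⱼ)⁻¹ · s r / (s + r)`. Integrating gives the claim with
`C = (pᵢ + pⱼ)(1 - pᵢ - pⱼ) / (4 pᵢpⱼ)`, which is positive because a third class has positive prior.
-/

open MeasureTheory Finset

theorem mul_div_le_div_of_mul_le {a b c t : ℝ} (ha : 0 ≤ a) (hb : 0 ≤ b) (hc : 0 < c)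
    (hcb : c * b ≤ t) : a * b / t ≤ a / c := by
  rcases (hcb.trans' (by positivity)).eq_or_lt with rfl | ht
  · simpa using div_nonneg ha hc.le
  · rw [div_le_div_iff₀ ht hc]
    nlinarith [mul_le_mul_of_nonneg_left hcb ha]

theorem div_le_div_add_mul_mul_div_of_le_mul_sq {x s r c : ℝ} (hx : 0 ≤ x) (hs : 0 ≤ s)
    (hr : 0 ≤ r) (hxs : x ≤ c * s ^ 2) : x / s ≤ x / (s + r) + c * (s * r / (s + r)) := by
  rcases hs.eq_or_lt with rfl | hs
  · obtain rfl : x = 0 := by simp at hxs; linarith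
    simp
  · calc x / s = x / (s + r) + x * r / (s * (s + r)) := by field_simp
      _ ≤ x / (s + r) + c * s ^ 2 * r / (s * (s + r)) := by gcongr
      _ = x / (s + r) + c * (s * r / (s + r)) := by field_simp

theorem add_lt_one_of_two_lt_card {ι : Type*} [Fintype ι] {p : ι → ℝ} (hp : ∀ k, 0 < p k)
    (hp1 : ∑ k, p k = 1) (hcard : 2 < Fintype.card ι) {i j : ι} (hij : i ≠ j) :
    p i + p j < 1 := by
  classical
  obtain ⟨k, -, hk⟩ := exists_mem_notMem_of_card_lt_card (s := {i, j}) (t := univ)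
    (card_le_two.trans_lt hcard)
  rw [← hp1, ← sum_pair hij]
  exact sum_lt_sum_of_subset (subset_univ _) (mem_univ k) hk (hp k) fun l _ _ => (hp l).le

section Mixture

variable {m d : ℕ} {p : Fin m → ℝ} {f : Fin m → (Fin d → ℝ) → ℝ} {i j : Fin m}

noncomputable def pairMixture (p : Fin m → ℝ) (f : Fin m → (Fin d → ℝ) → ℝ) (i j : Fin m)
    (x : Fin d → ℝ) : ℝ :=
  p i * f i x + p j * f j x

noncomputable def restMixture (p : Fin m → ℝ) (f : Fin m → (Fin d → ℝ) → ℝ) (i j : Fin m)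
    (x : Fin d → ℝ) : ℝ :=
  ∑ k ∈ univ.filter (fun k => k ≠ i ∧ k ≠ j), p k * f k x

theorem mixture_eq_pairMixture_add_restMixture (hij : i ≠ j) (x : Fin d → ℝ) :
    mixture p f x = pairMixture p f i j x + restMixture p f i j x := by
  have hpair : univ.filter (fun k => ¬(k ≠ i ∧ k ≠ j)) = {i, j} := by
    ext k; simp only [mem_filter, mem_univ, true_and, mem_insert, mem_singleton]; tauto
  rw [mixture, ← sum_filter_not_add_sum_filter univ (fun k => k ≠ i ∧ k ≠ j), hpair,
    sum_pair hij, pairMixture, restMixture]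

theorem measurable_mixture (hf : ∀ k, Measurable (f k)) : Measurable (mixture p f) := by
  unfold mixture; fun_prop

theorem pairMixture_nonneg (hp : ∀ k, 0 ≤ p k) (hf0 : ∀ k x, 0 ≤ f k x) (x : Fin d → ℝ) :
    0 ≤ pairMixture p f i j x := by
  unfold pairMixture; have := hp i; have := hp j; have := hf0 i x; have := hf0 j x; positivity

theorem restMixture_nonneg (hp : ∀ k, 0 ≤ p k) (hf0 : ∀ k x, 0 ≤ f k x) (x : Fin d → ℝ) :
    0 ≤ restMixture p f i j x :=
  sum_nonneg fun k _ => mul_nonneg (hp k) (hf0 k x)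

theorem mixture_nonneg (hp : ∀ k, 0 ≤ p k) (hf0 : ∀ k x, 0 ≤ f k x) (x : Fin d → ℝ) :
    0 ≤ mixture p f x :=
  sum_nonneg fun k _ => mul_nonneg (hp k) (hf0 k x)

theorem mul_le_mixture (hp : ∀ k, 0 ≤ p k) (hf0 : ∀ k x, 0 ≤ f k x) (k : Fin m) (x : Fin d → ℝ) :
    p k * f k x ≤ mixture p f x :=
  single_le_sum (f := fun k => p k * f k x) (fun k _ => mul_nonneg (hp k) (hf0 k x)) (mem_univ k)

theorem div_pairMixture_le (hp : ∀ k, 0 < p k) (hf0 : ∀ k x, 0 ≤ f k x) (hij : i ≠ j)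
    (x : Fin d → ℝ) :
    f i x * f j x / pairMixture p f i j x ≤ f i x * f j x / mixture p f x +
      (4 * p i * p j)⁻¹ * (pairMixture p f i j x * restMixture p f i j x / mixture p f x) := by
  have hpi := hp i
  have hpj := hp j
  have hfi := hf0 i x
  have hfj := hf0 j x
  rw [mixture_eq_pairMixture_add_restMixture hij]
  refine div_le_div_add_mul_mul_div_of_le_mul_sq (by positivity)
    (pairMixture_nonneg (fun k => (hp k).le) hf0 x)
    (restMixture_nonneg (fun k => (hp k).le) hf0 x) ?_
  rw [inv_mul_eq_div, le_div_iff₀ (by positivity), pairMixture]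
  linarith [four_mul_le_sq_add (p i * f i x) (p j * f j x)]

theorem integrable_mul_div_mixture (hp : ∀ k, 0 < p k) (hf : ∀ k, Measurable (f k))
    (hf0 : ∀ k x, 0 ≤ f k x) (hfi : Integrable (f i)) :
    Integrable (fun x => f i x * f j x / mixture p f x) := by
  refine integrable_of_le_of_le (g₁ := 0) (g₂ := fun x => f i x / p j)
    (((hf i).mul (hf j)).div (measurable_mixture hf)).aestronglyMeasurable
    (ae_of_all _ fun x => ?_) (ae_of_all _ fun x => ?_) (integrable_zero _ _ _)
    (hfi.div_const _)
  · exact div_nonneg (mul_nonneg (hf0 i x) (hf0 j x)) (mixture_nonneg (fun k => (hp k).le) hf0 x)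
  · exact mul_div_le_div_of_mul_le (hf0 i x) (hf0 j x) (hp j)
      (mul_le_mixture (fun k => (hp k).le) hf0 j x)

theorem integrable_pairMixture_mul_restMixture_div (hp : ∀ k, 0 ≤ p k)
    (hf : ∀ k, Measurable (f k)) (hf0 : ∀ k x, 0 ≤ f k x) (hij : i ≠ j)
    (hfi : Integrable (f i)) (hfj : Integrable (f j)) :
    Integrable (fun x => pairMixture p f i j x * restMixture p f i j x / mixture p f x) := by
  refine integrable_of_le_of_le (g₁ := 0) (g₂ := pairMixture p f i j) ?_
    (ae_of_all _ fun x => ?_) (ae_of_all _ fun x => ?_) (integrable_zero _ _ _)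
    ((hfi.const_mul _).add (hfj.const_mul _))
  · have hpair : Measurable (pairMixture p f i j) := by unfold pairMixture; fun_prop
    have hrest : Measurable (restMixture p f i j) := by unfold restMixture; fun_prop
    exact ((hpair.mul hrest).div (measurable_mixture hf)).aestronglyMeasurable
  · exact div_nonneg (mul_nonneg (pairMixture_nonneg hp hf0 x) (restMixture_nonneg hp hf0 x))
      (mixture_nonneg hp hf0 x)
  · have hrest : restMixture p f i j x ≤ mixture p f x := by
      rw [mixture_eq_pairMixture_add_restMixture hij]
      linarith [pairMixture_nonneg hp hf0 x (i := i) (j := j)]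
    simp only [mul_div_assoc]
    exact mul_le_of_le_one_right (pairMixture_nonneg hp hf0 x)
      (div_le_one_of_le₀ hrest (mixture_nonneg hp hf0 x))

theorem integral_div_pairMixture_le (hp : ∀ k, 0 < p k) (hf : ∀ k, Measurable (f k))
    (hf0 : ∀ k x, 0 ≤ f k x) (hij : i ≠ j) (hfi : Integrable (f i)) (hfj : Integrable (f j))
    (hint : Integrable (fun x => f i x * f j x / pairMixture p f i j x)) :
    ∫ x, f i x * f j x / pairMixture p f i j x ≤ (∫ x, f i x * f j x / mixture p f x) +
      (4 * p i * p j)⁻¹ * ∫ x, pairMixture p f i j x * restMixture p f i j x / mixture p f x := by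
  have hghp := integrable_mul_div_mixture hp hf hf0 hfi (j := j)
  have hrest := (integrable_pairMixture_mul_restMixture_div (fun k => (hp k).le) hf hf0 hij hfi
    hfj).const_mul (4 * p i * p j)⁻¹
  rw [← integral_const_mul, ← integral_add hghp hrest]
  exact integral_mono hint (hghp.add hrest) (div_pairMixture_le hp hf0 hij)

end Mixture

theorem HP_le_GHP_add_const_mul_one_sub_HPdiv_general
    (m d : ℕ) (hm : 3 ≤ m)
    (p : Fin m → ℝ) (hp : ∀ k, 0 < p k) (hp1 : ∑ k, p k = 1)
    (i j : Fin m) (hij : i ≠ j) :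
    ∃ C : ℝ, 0 < C ∧
      ∀ f : Fin m → (Fin d → ℝ) → ℝ,
        (∀ k, Measurable (f k)) →
        (∀ k x, 0 ≤ f k x) →
        (∀ k, ∫ x : Fin d → ℝ, f k x = 1) →
        Integrable (fun x : Fin d → ℝ =>
          f i x * f j x / (p i * f i x + p j * f j x)) →
        (∫ x : Fin d → ℝ, f i x * f j x / (p i * f i x + p j * f j x)) ≤
          (∫ x : Fin d → ℝ, f i x * f j x / mixture p f x) +
            C * (1 / ((p i + p j) * (1 - p i - p j)) *
              ∫ x : Fin d → ℝ,
                (p i * f i x + p j * f j x) *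
                  (∑ k ∈ Finset.univ.filter (fun k => k ≠ i ∧ k ≠ j), p k * f k x) /
                  mixture p f x) := by
  have hpi := hp i
  have hpj := hp j
  have hothers : 0 < 1 - p i - p j := by
    linarith [add_lt_one_of_two_lt_card hp hp1 (by rw [Fintype.card_fin]; omega) hij]
  refine ⟨(p i + p j) * (1 - p i - p j) / (4 * p i * p j), by positivity,
    fun f hf hf0 hf1 hint => ?_⟩
  have hfi : ∀ k, Integrable (f k) := fun k => integrable_of_integral_eq_one (hf1 k)
  calc _ ≤ _ := integral_div_pairMixture_le hp hf hf0 hij (hfi i) (hfi j) hint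
    _ = _ := by
      congr 1
      field_simp
      rfl

theorem HP_le_GHP_add_const_mul_one_sub_HPdiv
    (m d : ℕ) (hm : 3 ≤ m) (hd : 1 ≤ d)
    (p : Fin m → ℝ) (hp : ∀ k, 0 < p k) (hp1 : ∑ k, p k = 1)
    (i j : Fin m) (hij : i ≠ j) :
    ∃ C : ℝ, 0 < C ∧
      ∀ f : Fin m → (Fin d → ℝ) → ℝ,
        (∀ k, Measurable (f k)) →
        (∀ k x, 0 ≤ f k x) →
        (∀ k, ∫ x : Fin d → ℝ, f k x = 1) →
        Integrable (fun x : Fin d → ℝ =>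
          f i x * f j x / (p i * f i x + p j * f j x)) →
        (∫ x : Fin d → ℝ, f i x * f j x / (p i * f i x + p j * f j x)) ≤
          (∫ x : Fin d → ℝ, f i x * f j x / mixture p f x) +
            C * (1 / ((p i + p j) * (1 - p i - p j)) *
              ∫ x : Fin d → ℝ,
                (p i * f i x + p j * f j x) *
                  (∑ k ∈ Finset.univ.filter (fun k => k ≠ i ∧ k ≠ j), p k * f k x) /
                  mixture p f x) :=
  HP_le_GHP_add_const_mul_one_sub_HPdiv_general m d hm p hp hp1 i j hij
end
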